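/- arXiv:1809.01607 — 3 statements merged into one kernel-verified Lean document; each statement's English description precedes it below -/
import Mathlib

section
/- If Condition (★) holds for the specification φ and the fault model δ — i.e., for every output o_i ∈ O there exists a test strategy T ∈ Moore(O,I) (observing only O, not o_i′) such that for all S ∈ Mealy(I, O∪{o_i′}), trace(T,S) ⊨ ((φ[o_i←o_i′] ∧ δ) → ¬φ) — then a universally complete test suite Ω ⊆ Moore(O,I) with respect to δ exists. -/
namespace TestSynth

/-- LTL formulas over atomic propositions of type `V`. -/
inductive LTL (V : Type) : Type
  | tt : LTL V
  | atom (v : V) : LTL V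
  | neg (φ : LTL V) : LTL V
  | disj (φ ψ : LTL V) : LTL V
  | next (φ : LTL V) : LTL V
  | untl (φ ψ : LTL V) : LTL V

namespace LTL

/-- Satisfaction of an LTL formula on an infinite trace `σ : ℕ → V → Bool`. -/
def Sat {V : Type} : LTL V → (ℕ → V → Bool) → Prop
  | .tt, _ => True
  | .atom v, σ => σ 0 v = true
  | .neg φ, σ => ¬ Sat φ σ
  | .disj φ ψ, σ => Sat φ σ ∨ Sat ψ σ
  | .next φ, σ => Sat φ (fun n => σ (n + 1))
  | .untl φ ψ, σ =>
      ∃ j, Sat ψ (fun n => σ (n + j)) ∧ ∀ k, k < j → Sat φ (fun n => σ (n + k))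

def conj {V : Type} (φ ψ : LTL V) : LTL V := .neg (.disj (.neg φ) (.neg ψ))
def imp {V : Type} (φ ψ : LTL V) : LTL V := .disj (.neg φ) ψ
def liff {V : Type} (φ ψ : LTL V) : LTL V := conj (imp φ ψ) (imp ψ φ)
/-- `F φ` (eventually). -/
def ev {V : Type} (φ : LTL V) : LTL V := .untl .tt φ
/-- `G φ` (always). -/
def alw {V : Type} (φ : LTL V) : LTL V := .neg (ev (.neg φ))

/-- Rename atomic propositions. -/
def rename {V W : Type} (f : V → W) : LTL V → LTL W
  | .tt => .tt
  | .atom v => .atom (f v)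
  | .neg φ => .neg (rename f φ)
  | .disj φ ψ => .disj (rename f φ) (rename f ψ)
  | .next φ => .next (rename f φ)
  | .untl φ ψ => .untl (rename f φ) (rename f ψ)

/-- The atom `v` occurs in the formula. -/
def Mentions {V : Type} (v : V) : LTL V → Prop
  | .tt => False
  | .atom w => w = v
  | .neg φ => Mentions v φ
  | .disj φ ψ => Mentions v φ ∨ Mentions v ψ
  | .next φ => Mentions v φ
  | .untl φ ψ => Mentions v φ ∨ Mentions v ψ

end LTL

/-- A Mealy machine with input letters `A` and output letters `B` (finite state set). -/
structure Mealy (A B : Type) where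
  State : Type
  finState : Finite State
  init : State
  trans : State → A → State
  out : State → A → B

/-- A Moore machine with input letters `A` and output letters `B` (finite state set):
the output does not depend on the current input letter. -/
structure Moore (A B : Type) where
  State : Type
  finState : Finite State
  init : State
  trans : State → A → State
  out : State → B

/-- Joint execution of a test strategy `T` (a Moore machine producing the system's inputs,
observing the system's outputs through `obs`) with a Mealy machine `S`. -/
def exec {A B C : Type} (T : Moore C A) (S : Mealy A B) (obs : B → C) :
    ℕ → T.State × S.State
  | 0 => (T.init, S.init)
  | n + 1 =>
      let p := exec T S obs n
      (T.trans p.1 (obs (S.out p.2 (T.out p.1))), S.trans p.2 (T.out p.1))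

/-- The input/output letters produced at step `n` of the joint execution. -/
def io {A B C : Type} (T : Moore C A) (S : Mealy A B) (obs : B → C) (n : ℕ) : A × B :=
  let p := exec T S obs n
  (T.out p.1, S.out p.2 (T.out p.1))

/-- The signals: inputs `I`, outputs `O`, and one fresh signal `o_i′`. -/
abbrev Sig (I O : Type) : Type := I ⊕ (O ⊕ Unit)

/-- The fresh signal `o_i′`. -/
def fresh (I O : Type) : Sig I O := Sum.inr (Sum.inr ())

/-- Test strategies `Moore(O, I)`. -/
abbrev Strat (I O : Type) : Type 1 := Moore (O → Bool) (I → Bool)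
/-- Systems `Mealy(I, O)`. -/
abbrev SysF (I O : Type) : Type 1 := Mealy (I → Bool) (O → Bool)
/-- Systems `Mealy(I, O ∪ {o_i′})`. -/
abbrev SysE (I O : Type) : Type 1 := Mealy (I → Bool) ((O ⊕ Unit) → Bool)
/-- Strategies `Moore(O ∪ {o_i′}, I)` observing all outputs including `o_i′`. -/
abbrev StratE (I O : Type) : Type 1 := Moore ((O ⊕ Unit) → Bool) (I → Bool)

/-- trace(T, S) for `S ∈ Mealy(I,O)` as a valuation of all signals
(the fresh signal, which does not exist in `S`, is `false`). -/
def trF {I O : Type} (T : Strat I O) (S : SysF I O) : ℕ → Sig I O → Bool :=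
  fun n v =>
    match v with
    | Sum.inl i => (io T S id n).1 i
    | Sum.inr (Sum.inl o) => (io T S id n).2 o
    | Sum.inr (Sum.inr _) => false

/-- Observation of the outputs `O` only (hiding `o_i′`). -/
def obsO {O : Type} (y : (O ⊕ Unit) → Bool) : O → Bool := fun o => y (Sum.inl o)

/-- trace(T, S) for `S ∈ Mealy(I, O ∪ {o_i′})` and `T ∈ Moore(O, I)` observing only `O`. -/
def trP {I O : Type} (T : Strat I O) (S : SysE I O) : ℕ → Sig I O → Bool :=
  fun n v =>
    match v with
    | Sum.inl i => (io T S obsO n).1 i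
    | Sum.inr w => (io T S obsO n).2 w

/-- trace(T, S) for `S ∈ Mealy(I, O ∪ {o_i′})` and `T` observing all outputs. -/
def trE {I O : Type} (T : StratE I O) (S : SysE I O) : ℕ → Sig I O → Bool :=
  fun n v =>
    match v with
    | Sum.inl i => (io T S id n).1 i
    | Sum.inr w => (io T S id n).2 w

/-- `S ⊨r φ` for `S ∈ Mealy(I,O)`. -/
def RealizesF {I O : Type} (S : SysF I O) (φ : LTL (Sig I O)) : Prop :=
  ∀ T : Strat I O, φ.Sat (trF T S)

/-- `S ⊨r φ` for `S ∈ Mealy(I, O ∪ {o_i′})`. -/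
def RealizesE {I O : Type} (S : SysE I O) (φ : LTL (Sig I O)) : Prop :=
  ∀ T : StratE I O, φ.Sat (trE T S)

/-- The output signals `(O ∖ {o_i}) ∪ {o_i′}`. -/
abbrev RestSig (O : Type) (oi : O) : Type := {o : O // o ≠ oi} ⊕ Unit
/-- Systems `Mealy(I, (O ∖ {o_i}) ∪ {o_i′})`. -/
abbrev SysRest (I O : Type) (oi : O) : Type 1 := Mealy (I → Bool) (RestSig O oi → Bool)
/-- Faults `Mealy(I ∪ (O ∖ {o_i}) ∪ {o_i′}, {o_i})`. -/
abbrev FaultM (I O : Type) (oi : O) : Type 1 := Mealy ((I ⊕ RestSig O oi) → Bool) Bool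

/-- trace(T, S′) for `S′ ∈ Mealy(I, (O ∖ {o_i}) ∪ {o_i′})`, as a valuation of all signals
(the absent signal `o_i` is `false`). -/
def trRest {I O : Type} [DecidableEq O] (oi : O)
    (T : Moore (RestSig O oi → Bool) (I → Bool)) (S : SysRest I O oi) :
    ℕ → Sig I O → Bool :=
  fun n v =>
    match v with
    | Sum.inl i => (io T S id n).1 i
    | Sum.inr (Sum.inl o) =>
        if h : o = oi then false else (io T S id n).2 (Sum.inl ⟨o, h⟩)
    | Sum.inr (Sum.inr _) => (io T S id n).2 (Sum.inr ())

/-- `S′ ⊨r φ` for `S′ ∈ Mealy(I, (O ∖ {o_i}) ∪ {o_i′})`. -/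
def RealizesRest {I O : Type} [DecidableEq O] (oi : O) (S : SysRest I O oi)
    (φ : LTL (Sig I O)) : Prop :=
  ∀ T : Moore (RestSig O oi → Bool) (I → Bool), φ.Sat (trRest oi T S)

/-- trace(E, F) for a fault `F ∈ Mealy(I ∪ (O ∖ {o_i}) ∪ {o_i′}, {o_i})` run against an
environment `E`, as a valuation of all signals. -/
def trFault {I O : Type} [DecidableEq O] (oi : O)
    (E : Moore Bool ((I ⊕ RestSig O oi) → Bool)) (F : FaultM I O oi) :
    ℕ → Sig I O → Bool :=
  fun n v =>
    match v with
    | Sum.inl i => (io E F id n).1 (Sum.inl i)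
    | Sum.inr (Sum.inl o) =>
        if h : o = oi then (io E F id n).2
        else (io E F id n).1 (Sum.inr (Sum.inl ⟨o, h⟩))
    | Sum.inr (Sum.inr _) => (io E F id n).1 (Sum.inr (Sum.inr ()))

/-- `F ⊨r δ` for a fault `F ∈ Mealy(I ∪ (O ∖ {o_i}) ∪ {o_i′}, {o_i})`. -/
def RealizesFault {I O : Type} [DecidableEq O] (oi : O) (F : FaultM I O oi)
    (δ : LTL (Sig I O)) : Prop :=
  ∀ E : Moore Bool ((I ⊕ RestSig O oi) → Bool), δ.Sat (trFault oi E F)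

/-- The sequential composition `S′ ∘ F ∈ Mealy(I, O ∪ {o_i′})`. -/
def compSF {I O : Type} [DecidableEq O] (oi : O) (S' : SysRest I O oi)
    (F : FaultM I O oi) : SysE I O where
  State := S'.State × F.State
  finState := by haveI := S'.finState; haveI := F.finState; exact inferInstance
  init := (S'.init, F.init)
  trans := fun p x =>
    (S'.trans p.1 x,
     F.trans p.2 (fun w =>
       match w with
       | Sum.inl i => x i
       | Sum.inr r => S'.out p.1 x r))
  out := fun p x w =>
    match w with
    | Sum.inl o =>
        if h : o = oi then
          F.out p.2 (fun z =>
            match z with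
            | Sum.inl i => x i
            | Sum.inr r => S'.out p.1 x r)
        else S'.out p.1 x (Sum.inl ⟨o, h⟩)
    | Sum.inr _ => S'.out p.1 x (Sum.inr ())

/-- `φ[o_i ← o_i′]`: textual substitution of `o_i′` for all occurrences of `o_i`. -/
def substOut {I O : Type} [DecidableEq O] (oi : O) (φ : LTL (Sig I O)) : LTL (Sig I O) :=
  φ.rename (fun v =>
    match v with
    | Sum.inl i => Sum.inl i
    | Sum.inr (Sum.inl o) => if o = oi then fresh I O else Sum.inr (Sum.inl o)
    | Sum.inr (Sum.inr u) => Sum.inr (Sum.inr u))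

/-- A test suite `Ω ⊆ Moore(O, I)` is universally complete w.r.t. specification `φ`
and fault model `δ`. -/
def UnivComplete {I O : Type} [DecidableEq O] (φ δ : LTL (Sig I O))
    (Ω : Set (Strat I O)) : Prop :=
  ∀ oi : O, ∀ S' : SysRest I O oi, ∀ F : FaultM I O oi,
    ∃ T ∈ Ω,
      RealizesRest oi S' (substOut oi φ) → RealizesFault oi F δ →
        ¬ φ.Sat (trP T (compSF oi S' F))

/-- Condition (★): for every output `o_i` there is a strategy `T ∈ Moore(O,I)` with
`trace(T,S) ⊨ ((φ[o_i←o_i′] ∧ δ) → ¬φ)` for all `S ∈ Mealy(I, O ∪ {o_i′})`. -/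
def Star {I O : Type} [DecidableEq O] (φ δ : LTL (Sig I O)) : Prop :=
  ∀ oi : O, ∃ T : Strat I O, ∀ S : SysE I O,
    LTL.Sat (LTL.imp (LTL.conj (substOut oi φ) δ) (LTL.neg φ)) (trP T S)

/-- The four fault occurrence frequencies `F`, `GF`, `FG`, `G`. -/
def freqs (V : Type) : Set (LTL V → LTL V) :=
  {LTL.ev, fun χ => LTL.alw (LTL.ev χ), fun χ => LTL.ev (LTL.alw χ), LTL.alw}

/-! Take `Ω` to consist of one witness `T_{o_i}` of (★) for each output `o_i`. Running
`T_{o_i}` against `S′ ∘ F` can be simulated twice: `T_{o_i}` together with `F` is a test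
strategy for `S′` (`F` supplies the output `o_i` that `T_{o_i}` observes), and `T_{o_i}`
together with `S′` is an environment for `F`. The first simulated trace agrees with
`trace(T_{o_i}, S′ ∘ F)` everywhere except at `o_i`, which `φ[o_i←o_i′]` does not mention; the
second agrees with it everywhere. So `S′ ⊨r φ[o_i←o_i′]` and `F ⊨r δ` put both formulas on
that trace, and (★) yields `¬φ`. -/

namespace LTL

variable {V : Type}

theorem sat_conj {φ ψ : LTL V} {σ : ℕ → V → Bool} : (conj φ ψ).Sat σ ↔ φ.Sat σ ∧ ψ.Sat σ := by
  simp only [conj, Sat, not_or, not_not]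

theorem sat_imp {φ ψ : LTL V} {σ : ℕ → V → Bool} : (imp φ ψ).Sat σ ↔ (φ.Sat σ → ψ.Sat σ) := by
  simp only [imp, Sat, imp_iff_not_or]

theorem sat_congr {φ : LTL V} {σ τ : ℕ → V → Bool}
    (h : ∀ n v, φ.Mentions v → σ n v = τ n v) : φ.Sat σ ↔ φ.Sat τ := by
  induction φ generalizing σ τ with
  | tt => rfl
  | atom v => simp only [Sat, h 0 v rfl]
  | neg φ ih => exact not_congr (ih h)
  | disj φ ψ ihφ ihψ =>
      exact or_congr (ihφ fun n v hv => h n v (.inl hv)) (ihψ fun n v hv => h n v (.inr hv))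
  | next φ ih => exact ih fun n v hv => h (n + 1) v hv
  | untl φ ψ ihφ ihψ =>
      exact exists_congr fun j =>
        and_congr (ihψ fun n v hv => h (n + j) v (.inr hv))
          (forall_congr' fun k => imp_congr_right fun _ =>
            ihφ fun n v hv => h (n + k) v (.inl hv))

theorem exists_mentions_of_mentions_rename {W : Type} {f : V → W} {φ : LTL V} {w : W}
    (h : (φ.rename f).Mentions w) : ∃ v, φ.Mentions v ∧ f v = w := by
  induction φ with
  | tt => exact h.elim
  | atom v => exact ⟨v, rfl, h⟩
  | neg φ ih => exact ih h
  | next φ ih => exact ih h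
  | disj φ ψ ihφ ihψ | untl φ ψ ihφ ihψ =>
      rcases h with h | h
      · obtain ⟨v, hv, rfl⟩ := ihφ h; exact ⟨v, .inl hv, rfl⟩
      · obtain ⟨v, hv, rfl⟩ := ihψ h; exact ⟨v, .inr hv, rfl⟩

end LTL

theorem not_mentions_substOut {I O : Type} [DecidableEq O] (oi : O) (φ : LTL (Sig I O)) :
    ¬ (substOut oi φ).Mentions (Sum.inr (Sum.inl oi)) := by
  intro h
  obtain ⟨v, -, hv⟩ := LTL.exists_mentions_of_mentions_rename h
  rcases v with i | o | u
  · simp at hv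
  · by_cases ho : o = oi <;> simp [ho, fresh] at hv
  · simp at hv

section Simulation

variable {I O : Type} [DecidableEq O] (oi : O) (T : Strat I O)
  (S' : SysRest I O oi) (F : FaultM I O oi)

def envOfFault : Moore (RestSig O oi → Bool) (I → Bool) where
  State := T.State × F.State
  finState := by have := T.finState; have := F.finState; infer_instance
  init := (T.init, F.init)
  out p := T.out p.1
  trans p r :=
    let inp : (I ⊕ RestSig O oi) → Bool := fun w =>
      match w with
      | Sum.inl i => T.out p.1 i
      | Sum.inr z => r z
    (T.trans p.1 (fun o => if h : o = oi then F.out p.2 inp else r (Sum.inl ⟨o, h⟩)),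
     F.trans p.2 inp)

def envOfSystem : Moore Bool ((I ⊕ RestSig O oi) → Bool) where
  State := T.State × S'.State
  finState := by have := T.finState; have := S'.finState; infer_instance
  init := (T.init, S'.init)
  out p w :=
    match w with
    | Sum.inl i => T.out p.1 i
    | Sum.inr z => S'.out p.2 (T.out p.1) z
  trans p b :=
    (T.trans p.1 (fun o => if h : o = oi then b else S'.out p.2 (T.out p.1) (Sum.inl ⟨o, h⟩)),
     S'.trans p.2 (T.out p.1))

theorem exec_envOfFault (n : ℕ) :
    exec (envOfFault oi T F) S' id n =
      let p := exec T (compSF oi S' F) obsO n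
      ((p.1, p.2.2), p.2.1) := by
  induction n with
  | zero => rfl
  | succ n ih =>
      simp only [exec] at ih ⊢
      rw [ih]
      refine Prod.ext (Prod.ext ?_ rfl) rfl
      simp only [envOfFault, compSF, id]
      congr 1

theorem exec_envOfSystem (n : ℕ) :
    exec (envOfSystem oi T S') F id n =
      let p := exec T (compSF oi S' F) obsO n
      ((p.1, p.2.1), p.2.2) := by
  induction n with
  | zero => rfl
  | succ n ih =>
      simp only [exec] at ih ⊢
      rw [ih]
      refine Prod.ext (Prod.ext ?_ rfl) ?_
      · simp only [envOfSystem, compSF, id]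
        congr 1
      · simp only [envOfSystem, compSF]

theorem trRest_envOfFault {v : Sig I O} (hv : v ≠ Sum.inr (Sum.inl oi)) (n : ℕ) :
    trRest oi (envOfFault oi T F) S' n v = trP T (compSF oi S' F) n v := by
  rcases v with i | o | u
  · simp only [trRest, trP, io]; rw [exec_envOfFault]; rfl
  · have ho : o ≠ oi := fun h => hv (h ▸ rfl)
    simp only [trRest, trP, io, dif_neg ho]
    rw [exec_envOfFault]
    simp only [envOfFault, compSF, dif_neg ho]
  · simp only [trRest, trP, io]; rw [exec_envOfFault]; rfl

theorem trFault_envOfSystem :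
    trFault oi (envOfSystem oi T S') F = trP T (compSF oi S' F) := by
  funext n v
  rcases v with i | o | u
  · simp only [trFault, trP, io]; rw [exec_envOfSystem]; rfl
  · by_cases ho : o = oi
    · subst ho
      simp only [trFault, trP, io, dif_pos]
      rw [exec_envOfSystem]
      simp only [envOfSystem, compSF, dif_pos]
    · simp only [trFault, trP, io, dif_neg ho]
      rw [exec_envOfSystem]
      simp only [envOfSystem, compSF, dif_neg ho]
  · simp only [trFault, trP, io]; rw [exec_envOfSystem]; rfl

theorem sat_substOut_comp_of_realizesRest {φ : LTL (Sig I O)}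
    (hS' : RealizesRest oi S' (substOut oi φ)) : (substOut oi φ).Sat (trP T (compSF oi S' F)) :=
  (LTL.sat_congr fun n _ hv =>
    trRest_envOfFault oi T S' F (fun h => not_mentions_substOut oi φ (h ▸ hv)) n).mp
    (hS' (envOfFault oi T F))

theorem sat_comp_of_realizesFault {δ : LTL (Sig I O)} (hF : RealizesFault oi F δ) :
    δ.Sat (trP T (compSF oi S' F)) :=
  trFault_envOfSystem oi T S' F ▸ hF (envOfSystem oi T S')

end Simulation

theorem stmt0_general (I O : Type) [DecidableEq O]
    (φ δ : LTL (Sig I O))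
    (hstar : Star φ δ) :
    ∃ Ω : Set (Strat I O), UnivComplete φ δ Ω := by
  choose T hT using hstar
  refine ⟨Set.range T, fun oi S' F => ⟨T oi, Set.mem_range_self oi, fun hS' hF => ?_⟩⟩
  exact LTL.sat_imp.mp (hT oi (compSF oi S' F)) (LTL.sat_conj.mpr
    ⟨sat_substOut_comp_of_realizesRest oi _ S' F hS', sat_comp_of_realizesFault oi _ S' F hF⟩)

/-- Theorem 1: if Condition (★) holds for the specification `φ`
(over I ∪ O) and the fault model `δ`, then a universally complete test suite
`Ω ⊆ Moore(O,I)` with respect to `δ` exists. -/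
theorem stmt0 (I O : Type) [Finite I] [Finite O] [DecidableEq O]
    (φ δ : LTL (Sig I O)) (hφ : ¬ φ.Mentions (fresh I O))
    (hstar : Star φ δ) :
    ∃ Ω : Set (Strat I O), UnivComplete φ δ Ω :=
  stmt0_general I O φ δ hstar

end TestSynth
end

section
/- For all LTL formulas A and G over inputs I and outputs O, the following are equivalent: (i) for every system S ∈ Mealy(I,O) there exists a test strategy T ∈ Moore(O,I) such that S ⊨r A implies trace(T,S) ⊨ G; (ii) for every system S ∈ Mealy(I,O) there exists a test strategy T ∈ Moore(O,I) such that trace(T,S) ⊨ (A → G). -/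
namespace TestSynth

/-- Lemma 3: for all LTL formulas `A`, `G` over inputs I and outputs O,
(i) `∀ S ∃ T, (S ⊨r A) → trace(T,S) ⊨ G`  iff  (ii) `∀ S ∃ T, trace(T,S) ⊨ (A → G)`. -/
theorem stmt2 (I O : Type) [Finite I] [Finite O]
    (A G : LTL (Sig I O)) (hA : ¬ A.Mentions (fresh I O)) (hG : ¬ G.Mentions (fresh I O)) :
    (∀ S : SysF I O, ∃ T : Strat I O, RealizesF S A → G.Sat (trF T S)) ↔
      (∀ S : SysF I O, ∃ T : Strat I O, (A.imp G).Sat (trF T S)) := by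
  constructor
  · intro h S
    by_cases hr : RealizesF S A
    · obtain ⟨T, hT⟩ := h S
      exact ⟨T, Or.inr (hT hr)⟩
    · obtain ⟨T, hT⟩ := not_forall.mp hr
      exact ⟨T, Or.inl hT⟩
  · intro h S
    obtain ⟨T, hT⟩ := h S
    exact ⟨T, fun hr => hT.resolve_left (fun hn => hn (hr T))⟩

end TestSynth
end

section
/- Suppose the fault model δ is an LTL formula over I and O that does not reference the signal o_i′. Then Condition (★) — for every output o_i ∈ O there exists T ∈ Moore(O,I) such that for all S ∈ Mealy(I, O∪{o_i′}), trace(T,S) ⊨ ((φ[o_i←o_i′] ∧ δ) → ¬φ) — holds if and only if for every output o_i ∈ O there exists T ∈ Moore(O,I) such that for all S ∈ Mealy(I,O), trace(T,S) ⊨ (δ → ¬φ). -/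
namespace TestSynth

lemma sat_rename {V W : Type} (f : V → W) (φ : LTL V) (σ : ℕ → W → Bool) :
    (φ.rename f).Sat σ ↔ φ.Sat (fun n v => σ n (f v)) := by
  induction φ generalizing σ with
  | tt => simp [LTL.rename, LTL.Sat]
  | atom v => simp [LTL.rename, LTL.Sat]
  | neg φ ih => simp [LTL.rename, LTL.Sat, ih]
  | disj φ ψ ih1 ih2 => simp [LTL.rename, LTL.Sat, ih1, ih2]
  | next φ ih => simp [LTL.rename, LTL.Sat, ih]
  | untl φ ψ ih1 ih2 => simp [LTL.rename, LTL.Sat, ih1, ih2]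

lemma sat_congr {V : Type} (φ : LTL V) (σ τ : ℕ → V → Bool)
    (h : ∀ n v, φ.Mentions v → σ n v = τ n v) : φ.Sat σ ↔ φ.Sat τ := by
  induction φ generalizing σ τ with
  | tt => simp [LTL.Sat]
  | atom v => simpa [LTL.Sat] using by rw [h 0 v rfl]
  | neg φ ih => exact not_congr (ih _ _ h)
  | disj φ ψ ih1 ih2 =>
      exact or_congr (ih1 _ _ fun n v hv => h n v (Or.inl hv))
        (ih2 _ _ fun n v hv => h n v (Or.inr hv))
  | next φ ih => exact ih _ _ fun n v hv => h (n + 1) v hv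
  | untl φ ψ ih1 ih2 =>
      simp only [LTL.Sat]
      refine exists_congr fun j => and_congr
        (ih2 _ _ fun n v hv => h (n + j) v (Or.inr hv))
        (forall_congr' fun k => imp_congr Iff.rfl
          (ih1 _ _ fun n v hv => h (n + k) v (Or.inl hv)))

lemma sat_imp {V : Type} (φ ψ : LTL V) (σ : ℕ → V → Bool) :
    (LTL.imp φ ψ).Sat σ ↔ (φ.Sat σ → ψ.Sat σ) := by
  simp [LTL.imp, LTL.Sat]; tauto

lemma sat_conj {V : Type} (φ ψ : LTL V) (σ : ℕ → V → Bool) :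
    (LTL.conj φ ψ).Sat σ ↔ (φ.Sat σ ∧ ψ.Sat σ) := by
  simp [LTL.conj, LTL.Sat]

/-- Restriction of a system in `Mealy(I, O ∪ {o_i′})` to a system in `Mealy(I, O)`. -/
def restr {I O : Type} (S : SysE I O) : SysF I O where
  State := S.State
  finState := S.finState
  init := S.init
  trans := S.trans
  out := fun p x o => S.out p x (Sum.inl o)

lemma exec_restr {I O : Type} (T : Strat I O) (S : SysE I O) :
    ∀ n, exec T S obsO n = exec T (restr S) id n
  | 0 => rfl
  | n + 1 => by
      simp only [exec, exec_restr T S n]; rfl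

lemma trP_eq_trF {I O : Type} (T : Strat I O) (S : SysE I O) (n : ℕ) (v : Sig I O)
    (hv : v ≠ fresh I O) : trP T S n v = trF T (restr S) n v := by
  have he := exec_restr T S n
  match v with
  | Sum.inl i => simp [trP, trF, io, he]
  | Sum.inr (Sum.inl o) => simp [trP, trF, io, he]; rfl
  | Sum.inr (Sum.inr u) => exact absurd rfl hv

/-- Extension of a system in `Mealy(I,O)` to `Mealy(I, O ∪ {o_i′})` where the
fresh signal copies `o_i`. -/
def extend {I O : Type} (oi : O) (S : SysF I O) : SysE I O where
  State := S.State
  finState := S.finState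
  init := S.init
  trans := S.trans
  out := fun p x w =>
    match w with
    | Sum.inl o => S.out p x o
    | Sum.inr _ => S.out p x oi

lemma restr_extend {I O : Type} (oi : O) (S : SysF I O) : restr (extend oi S) = S := rfl

lemma trP_extend_fresh {I O : Type} (oi : O) (T : Strat I O) (S : SysF I O) (n : ℕ) :
    trP T (extend oi S) n (fresh I O) = trP T (extend oi S) n (Sum.inr (Sum.inl oi)) := rfl

/-- Lemma 4: if the fault model `δ` does not reference `o_i′`, then
Condition (★) holds iff for every output `o_i` there exists `T ∈ Moore(O,I)` such that
for all `S ∈ Mealy(I,O)`, `trace(T,S) ⊨ (δ → ¬φ)`. -/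
theorem stmt5 (I O : Type) [Finite I] [Finite O] [DecidableEq O]
    (φ δ : LTL (Sig I O)) (hφ : ¬ φ.Mentions (fresh I O)) (hδ : ¬ δ.Mentions (fresh I O)) :
    Star φ δ ↔
      (∀ oi : O, ∃ T : Strat I O, ∀ S : SysF I O, (δ.imp φ.neg).Sat (trF T S)) := by
  constructor
  · intro hstar oi
    obtain ⟨T, hT⟩ := hstar oi
    refine ⟨T, fun S => ?_⟩
    have h := hT (extend oi S)
    rw [sat_imp, sat_conj] at h
    set σ := trP T (extend oi S) with hσ
    set τ := trF T S with hτ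
    -- σ and τ agree off the fresh signal
    have hagree : ∀ n v, v ≠ fresh I O → σ n v = τ n v := by
      intro n v hv
      have := trP_eq_trF T (extend oi S) n v hv
      rwa [restr_extend] at this
    -- σ assigns the fresh signal the value of oi
    have hfr : ∀ n, σ n (fresh I O) = σ n (Sum.inr (Sum.inl oi)) :=
      fun n => trP_extend_fresh oi T S n
    have hδσ : δ.Sat σ ↔ δ.Sat τ :=
      sat_congr δ σ τ (fun n v hv => hagree n v (fun he => hδ (he ▸ hv)))
    have hφσ : φ.Sat σ ↔ φ.Sat τ :=
      sat_congr φ σ τ (fun n v hv => hagree n v (fun he => hφ (he ▸ hv)))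
    -- substitution is trivial on σ
    have hsub : (substOut oi φ).Sat σ ↔ φ.Sat σ := by
      rw [substOut, sat_rename]
      refine sat_congr φ _ σ fun n v _ => ?_
      match v with
      | Sum.inl i => rfl
      | Sum.inr (Sum.inr u) => rfl
      | Sum.inr (Sum.inl o) =>
          by_cases ho : o = oi
          · simp only [ho, if_pos rfl]
            exact (hfr n).trans rfl
          · simp [ho]
    rw [sat_imp, LTL.Sat]
    intro hδτ hφτ
    exact (h ⟨hsub.mpr (hφσ.mpr hφτ), hδσ.mpr hδτ⟩) (hφσ.mpr hφτ)
  · intro hr oi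
    obtain ⟨T, hT⟩ := hr oi
    refine ⟨T, fun S => ?_⟩
    have h := hT (restr S)
    rw [sat_imp, LTL.Sat] at h
    set σ := trP T S with hσ
    set τ := trF T (restr S) with hτ
    have hagree : ∀ n v, v ≠ fresh I O → σ n v = τ n v :=
      fun n v hv => trP_eq_trF T S n v hv
    have hδσ : δ.Sat σ ↔ δ.Sat τ :=
      sat_congr δ σ τ (fun n v hv => hagree n v (fun he => hδ (he ▸ hv)))
    have hφσ : φ.Sat σ ↔ φ.Sat τ :=
      sat_congr φ σ τ (fun n v hv => hagree n v (fun he => hφ (he ▸ hv)))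
    rw [sat_imp, sat_conj, LTL.Sat]
    rintro ⟨-, hδs⟩ hφs
    exact (h (hδσ.mp hδs)) (hφσ.mp hφs)

end TestSynth
end
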